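/- arXiv:2011.10209 — 3 statements merged into one kernel-verified Lean document; each statement's English description precedes it below -/
import Mathlib

section
/- Let E be a set and 𝒯 a collection of subsets of E. Define the orthogonal 𝒯⊥ = {u' ⊆ E | ∀ u ∈ 𝒯, u ∩ u' ≠ ∅}. Then the biorthogonal 𝒯⊥⊥ equals the upward closure of 𝒯, i.e. 𝒯⊥⊥ = {v ⊆ E | ∃ u ∈ 𝒯, u ⊆ v}. -/
def orth {E : Type*} (T : Set (Set E)) : Set (Set E) :=
  {u' : Set E | ∀ u ∈ T, (u ∩ u').Nonempty}

/-! The upward closure lies in `orth (orth T)` because every orthogonal is upward closed and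
contains `T` in its own orthogonal. Conversely, if `v` contains no member of `T`, then its
complement meets every member of `T`, so `vᶜ ∈ orth T`, and `v` cannot meet `vᶜ`. -/

section Orth

variable {E : Type*} {T : Set (Set E)} {u v : Set E}

theorem orth_upward_closed (hu : u ∈ orth T) (huv : u ⊆ v) : v ∈ orth T :=
  fun w hw => (hu w hw).mono (Set.inter_subset_inter_right w huv)

theorem subset_orth_orth (T : Set (Set E)) : T ⊆ orth (orth T) :=
  fun u hu w hw => Set.inter_comm u w ▸ hw u hu

theorem compl_mem_orth_iff : vᶜ ∈ orth T ↔ ∀ u ∈ T, ¬u ⊆ v := by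
  simp only [orth, Set.mem_ofPred_eq, Set.inter_compl_nonempty_iff]

end Orth

/-- The biorthogonal of `T` is the upward closure of `T`. -/
theorem biorth_eq_upward_closure {E : Type*} (T : Set (Set E)) :
    orth (orth T) = {v : Set E | ∃ u ∈ T, u ⊆ v} := by
  ext v
  constructor
  · intro hv
    by_contra hnot
    have hcompl : vᶜ ∈ orth T :=
      compl_mem_orth_iff.mpr fun u hu huv => hnot ⟨u, hu, huv⟩
    exact (hv vᶜ hcompl).ne_empty (Set.compl_inter_self v)
  · rintro ⟨u, hu, huv⟩
    exact orth_upward_closed (subset_orth_orth T hu) huv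
end

section
/- Let F : Rel → Rel be a functor on the category of sets and relations which is locally continuous (i.e. for each directed set D of relations in Rel(E,E'), F(⋃D) = ⋃_{s∈D} F(s)). If E ⊆ E', letting ι ∈ Rel(E,E') be the inclusion relation {(a,a) | a ∈ E}, then F(ι) is the graph of an injective function F(E) → F(E'). -/
/-!
With `ι : E → E'` and `π : E' → E` both the diagonal of `E`, one has `π ∘ ι = id_E` and
`ι ∘ π ⊆ id_{E'}`. Functoriality gives `F(π) ∘ F(ι) = id_{F(E)}`, and monotonicity of `F`
(a consequence of local continuity) gives `F(ι) ∘ F(π) ⊆ id_{F(E')}`. A relation with a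
left inverse in this strong sense is the graph of an injective function.
-/

/-- Relational composition (diagrammatic order). -/
def relComp {U : Type*} (r s : Set (U × U)) : Set (U × U) :=
  {p | ∃ b, (p.1, b) ∈ r ∧ (b, p.2) ∈ s}

/-- The diagonal (identity/inclusion) relation on a set `E`. -/
def diagRel {U : Type*} (E : Set U) : Set (U × U) :=
  {p | p.1 = p.2 ∧ p.1 ∈ E}

/-- A functor on the category `Rel` of sets (subsets of a universe `U`)
and relations. -/
structure RelFunctor (U : Type*) where
  obj : Set U → Set U
  map : (E F : Set U) → Set (U × U) → Set (U × U)
  map_sub : ∀ E F r, r ⊆ E ×ˢ F → map E F r ⊆ obj E ×ˢ obj F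
  map_id : ∀ E, map E E (diagRel E) = diagRel (obj E)
  map_comp : ∀ E F G r s, r ⊆ E ×ˢ F → s ⊆ F ×ˢ G →
    map E G (relComp r s) = relComp (map E F r) (map F G s)

/-- Local continuity: commutation with directed unions of morphisms. -/
def LocallyContinuous {U : Type*} (F : RelFunctor U) : Prop :=
  ∀ (E E' : Set U) (D : Set (Set (U × U))), D.Nonempty → DirectedOn (· ⊆ ·) D →
    (∀ r ∈ D, r ⊆ E ×ˢ E') → F.map E E' (⋃₀ D) = ⋃ r ∈ D, F.map E E' r

@[simp]
lemma mem_diagRel {U : Type*} {E : Set U} {a b : U} : (a, b) ∈ diagRel E ↔ a = b ∧ a ∈ E :=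
  Iff.rfl

@[simp]
lemma mem_relComp {U : Type*} {r s : Set (U × U)} {a c : U} :
    (a, c) ∈ relComp r s ↔ ∃ b, (a, b) ∈ r ∧ (b, c) ∈ s :=
  Iff.rfl

lemma diagRel_mono {U : Type*} {E E' : Set U} (h : E ⊆ E') : diagRel E ⊆ diagRel E' :=
  fun _ hp => ⟨hp.1, h hp.2⟩

lemma diagRel_subset_prod {U : Type*} {E A B : Set U} (hA : E ⊆ A) (hB : E ⊆ B) :
    diagRel E ⊆ A ×ˢ B := by
  rintro ⟨a, b⟩ ⟨h, ha⟩
  obtain rfl : a = b := h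
  exact ⟨hA ha, hB ha⟩

@[simp]
lemma relComp_diagRel_self {U : Type*} (E : Set U) :
    relComp (diagRel E) (diagRel E) = diagRel E := by
  ext ⟨a, b⟩
  simp only [mem_relComp, mem_diagRel]
  constructor
  · rintro ⟨c, ⟨rfl, ha⟩, rfl, -⟩
    exact ⟨rfl, ha⟩
  · rintro ⟨rfl, ha⟩
    exact ⟨a, ⟨rfl, ha⟩, rfl, ha⟩

section LeftInverse

variable {U : Type*} {A B : Set U} {f g : Set (U × U)}

lemma existsUnique_of_diagRel_subset_relComp (hfg : diagRel A ⊆ relComp f g)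
    (hgf : relComp g f ⊆ diagRel B) {a : U} (ha : a ∈ A) : ∃! b, (a, b) ∈ f := by
  obtain ⟨b₀, hab₀, hb₀a⟩ := mem_relComp.1 (hfg (mem_diagRel.2 ⟨rfl, ha⟩))
  exact ⟨b₀, hab₀, fun b hab => (mem_diagRel.1 (hgf (mem_relComp.2 ⟨a, hb₀a, hab⟩))).1.symm⟩

lemma eq_of_mem_of_relComp_eq_diagRel (hfg : relComp f g = diagRel A)
    (hgf : relComp g f ⊆ diagRel B) (hf : f ⊆ A ×ˢ B) {a a' b : U}
    (hab : (a, b) ∈ f) (ha'b : (a', b) ∈ f) : a = a' := by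
  have haa : (a, a) ∈ relComp f g := hfg ▸ mem_diagRel.2 ⟨rfl, (hf hab).1⟩
  obtain ⟨b₀, hab₀, hb₀a⟩ := mem_relComp.1 haa
  obtain rfl : b₀ = b := (mem_diagRel.1 (hgf (mem_relComp.2 ⟨a, hb₀a, hab⟩))).1
  have ha'a : (a', a) ∈ relComp f g := mem_relComp.2 ⟨b₀, ha'b, hb₀a⟩
  exact (mem_diagRel.1 (hfg ▸ ha'a)).1.symm

end LeftInverse

lemma LocallyContinuous.map_mono {U : Type*} {F : RelFunctor U} (hc : LocallyContinuous F)
    {E E' : Set U} {r s : Set (U × U)} (hrs : r ⊆ s) (hs : s ⊆ E ×ˢ E') :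
    F.map E E' r ⊆ F.map E E' s := by
  have hD := hc E E' {r, s} (Set.insert_nonempty r {s}) (directedOn_pair hrs)
    (by rintro t (rfl | rfl); exacts [hrs.trans hs, hs])
  rw [Set.sUnion_pair, Set.union_eq_self_of_subset_left hrs] at hD
  rw [hD]
  exact Set.subset_biUnion_of_mem (u := fun t => F.map E E' t) (Set.mem_insert r {s})

/-- A locally continuous functor on `Rel` maps inclusion relations to graphs of
injective functions `F(E) → F(E')`. -/
theorem locallyContinuous_map_inclusion_injective {U : Type*} (F : RelFunctor U)
    (hc : LocallyContinuous F) (E E' : Set U) (hEE' : E ⊆ E') :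
    (∀ a ∈ F.obj E, ∃! b, (a, b) ∈ F.map E E' (diagRel E)) ∧
      (∀ a a' b, (a, b) ∈ F.map E E' (diagRel E) → (a', b) ∈ F.map E E' (diagRel E) →
        a = a') := by
  have hι : diagRel E ⊆ E ×ˢ E' := diagRel_subset_prod subset_rfl hEE'
  have hπ : diagRel E ⊆ E' ×ˢ E := diagRel_subset_prod hEE' subset_rfl
  have hπι : relComp (F.map E E' (diagRel E)) (F.map E' E (diagRel E)) =
      diagRel (F.obj E) := by
    rw [← F.map_comp _ _ _ _ _ hι hπ, relComp_diagRel_self, F.map_id]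
  have hιπ : relComp (F.map E' E (diagRel E)) (F.map E E' (diagRel E)) ⊆
      diagRel (F.obj E') := by
    rw [← F.map_comp _ _ _ _ _ hπ hι, relComp_diagRel_self, ← F.map_id]
    exact hc.map_mono (diagRel_mono hEE') (diagRel_subset_prod subset_rfl subset_rfl)
  exact ⟨fun a ha => existsUnique_of_diagRel_subset_relComp hπι.ge hιπ ha,
    fun a a' b => eq_of_mem_of_relComp_eq_diagRel hπι hιπ (F.map_sub _ _ _ hι)⟩
end

section
/- Let ν be the interpretation of the type of flat natural numbers nat = μζ.(1 ⊕ ζ) in NUTS: its web is (isomorphic to) ℕ, and its totality is the least fixed point of the monotone operator Φ on totality candidates over ℕ given by Φ(𝒯) = {u ⊆ ℕ | 0 ∈ u or {n | n+1 ∈ u} ∈ 𝒯}. Then this least fixed point equals the set of all non-empty subsets of ℕ. -/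
/-!
A set containing `n` lies in every pre-fixed point of `PhiNat`: by induction on `n`, through the
clause `0 ∈ u` at `n = 0` and through the shifted set `{m | m + 1 ∈ u}` otherwise. Conversely,
the non-empty sets already form a fixed point, since `u` is non-empty iff `0 ∈ u` or its shift is.
-/

/-- The operator on totality candidates over `ℕ` whose least fixed point
interprets the type `nat = μζ.(1 ⊕ ζ)` in NUTS. -/
def PhiNat (T : Set (Set ℕ)) : Set (Set ℕ) :=
  {u : Set ℕ | 0 ∈ u ∨ {n : ℕ | n + 1 ∈ u} ∈ T}

lemma Set.nonempty_iff_zero_mem_or_nonempty_succ_preimage (u : Set ℕ) :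
    u.Nonempty ↔ 0 ∈ u ∨ {n : ℕ | n + 1 ∈ u}.Nonempty := by
  constructor
  · rintro ⟨_ | n, hn⟩
    · exact Or.inl hn
    · exact Or.inr ⟨n, hn⟩
  · rintro (h | ⟨n, hn⟩)
    · exact ⟨0, h⟩
    · exact ⟨n + 1, hn⟩

lemma phiNat_setOf_nonempty : PhiNat {u : Set ℕ | u.Nonempty} = {u : Set ℕ | u.Nonempty} :=
  Set.ext fun u => (u.nonempty_iff_zero_mem_or_nonempty_succ_preimage).symm

lemma mem_of_phiNat_subset {T : Set (Set ℕ)} (hT : PhiNat T ⊆ T) :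
    ∀ (n : ℕ) (u : Set ℕ), n ∈ u → u ∈ T
  | 0, _, hu => hT (Or.inl hu)
  | n + 1, _, hu => hT (Or.inr (mem_of_phiNat_subset hT n _ hu))

lemma setOf_nonempty_subset_of_phiNat_subset {T : Set (Set ℕ)} (hT : PhiNat T ⊆ T) :
    {u : Set ℕ | u.Nonempty} ⊆ T :=
  fun u ⟨n, hn⟩ => mem_of_phiNat_subset hT n u hn

/-- The totality of the NUTS interpretation of the type of flat natural
numbers is the least fixed point of `PhiNat` on totality candidates, and it
equals the collection of all non-empty subsets of `ℕ`. -/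
theorem nat_totality_least_fixed_point :
    PhiNat {u : Set ℕ | u.Nonempty} = {u : Set ℕ | u.Nonempty} ∧
    (∀ u ∈ {u : Set ℕ | u.Nonempty}, ∀ v : Set ℕ, u ⊆ v →
      v ∈ {u : Set ℕ | u.Nonempty}) ∧
    ∀ T : Set (Set ℕ), (∀ u ∈ T, ∀ v : Set ℕ, u ⊆ v → v ∈ T) →
      PhiNat T = T → {u : Set ℕ | u.Nonempty} ⊆ T :=
  ⟨phiNat_setOf_nonempty,
    fun _ hu _ huv => hu.mono huv,
    fun _ _ hfix => setOf_nonempty_subset_of_phiNat_subset hfix.le⟩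
end
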